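/- arXiv:2502.08159 — 3 statements merged into one kernel-verified Lean document; each statement's English description precedes it below -/
import Mathlib

section
/- Every torsion point of the Carlitz module in the algebraic closure of K_∞ lies in the disc D_∞: if λ satisfies C_a(λ) = 0 for some nonzero a ∈ A, then v_∞(λ) > −q/(q−1). -/
open Polynomial Finset

section aux
variable {E : Type*} [Field E] {v : E → ℚ}

lemma aux_v_one (hv_mul : ∀ x y : E, x ≠ 0 → y ≠ 0 → v (x * y) = v x + v y) :
    v (1 : E) = 0 := by
  have h := hv_mul 1 1 one_ne_zero one_ne_zero
  rw [one_mul] at h; linarith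

lemma aux_v_pow (hv_mul : ∀ x y : E, x ≠ 0 → y ≠ 0 → v (x * y) = v x + v y)
    (x : E) (hx : x ≠ 0) (n : ℕ) : v (x ^ n) = n * v x := by
  induction n with
  | zero => simpa using aux_v_one hv_mul
  | succ n ih =>
    rw [pow_succ, hv_mul _ _ (pow_ne_zero _ hx) hx, ih]
    push_cast; ring

lemma aux_v_neg (hv_mul : ∀ x y : E, x ≠ 0 → y ≠ 0 → v (x * y) = v x + v y)
    (x : E) (hx : x ≠ 0) : v (-x) = v x := by
  have h1 : v ((-1 : E) * (-1)) = v (-1 : E) + v (-1 : E) :=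
    hv_mul _ _ (by norm_num) (by norm_num)
  rw [neg_one_mul, neg_neg, aux_v_one hv_mul] at h1
  have h2 := hv_mul (-1) x (by norm_num) hx
  rw [neg_one_mul] at h2
  linarith

lemma aux_add_lt (hv_mul : ∀ x y : E, x ≠ 0 → y ≠ 0 → v (x * y) = v x + v y)
    (hv_add : ∀ x y : E, x ≠ 0 → y ≠ 0 → x + y ≠ 0 → min (v x) (v y) ≤ v (x + y))
    (x y : E) (hx : x ≠ 0) (hy : y ≠ 0) (hs : x + y ≠ 0)
    (hlt : v x < v y) : v (x + y) = v x := by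
  have h1 := hv_add x y hx hy hs
  rw [min_eq_left hlt.le] at h1
  by_contra hne
  have h3 : v x < v (x + y) := lt_of_le_of_ne h1 (Ne.symm hne)
  have h4 := hv_add (x + y) (-y) hs (neg_ne_zero.mpr hy) (by simpa using hx)
  rw [add_neg_cancel_right, aux_v_neg hv_mul y hy] at h4
  have h5 := lt_min h3 hlt
  linarith [min_le_iff.mp h4]

lemma aux_add_ne (hv_mul : ∀ x y : E, x ≠ 0 → y ≠ 0 → v (x * y) = v x + v y)
    (hv_add : ∀ x y : E, x ≠ 0 → y ≠ 0 → x + y ≠ 0 → min (v x) (v y) ≤ v (x + y))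
    (x y : E) (hx : x ≠ 0) (hy : y ≠ 0) (hne : v x ≠ v y) :
    x + y ≠ 0 ∧ v (x + y) = min (v x) (v y) := by
  have hs : x + y ≠ 0 := by
    intro h
    apply hne
    rw [← neg_eq_of_add_eq_zero_right h, aux_v_neg hv_mul x hx]
  refine ⟨hs, ?_⟩
  rcases lt_or_gt_of_ne hne with h | h
  · rw [aux_add_lt hv_mul hv_add x y hx hy hs h, min_eq_left h.le]
  · rw [add_comm] at hs ⊢
    rw [aux_add_lt hv_mul hv_add y x hy hx hs h, min_eq_right h.le]

lemma aux_sum (hv_mul : ∀ x y : E, x ≠ 0 → y ≠ 0 → v (x * y) = v x + v y)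
    (hv_add : ∀ x y : E, x ≠ 0 → y ≠ 0 → x + y ≠ 0 → min (v x) (v y) ≤ v (x + y))
    {ι : Type*} (s : Finset ι) (f : ι → E)
    (h0 : ∀ i ∈ s, f i ≠ 0)
    (hinj : ∀ i ∈ s, ∀ j ∈ s, v (f i) = v (f j) → i = j)
    (hs : s.Nonempty) :
    (∑ i ∈ s, f i) ≠ 0 ∧ ∃ j ∈ s, v (∑ i ∈ s, f i) = v (f j) := by
  classical
  induction s using Finset.cons_induction with
  | empty => simp at hs
  | cons a s ha ih =>
    rw [Finset.sum_cons]
    by_cases hsne : s.Nonempty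
    · obtain ⟨hne, j, hj, hvj⟩ := ih (fun i hi => h0 i (mem_cons_of_mem hi))
        (fun i hi j hj => hinj i (mem_cons_of_mem hi) j (mem_cons_of_mem hj)) hsne
      have hfa := h0 a (mem_cons_self a s)
      have hva : v (f a) ≠ v (∑ i ∈ s, f i) := by
        rw [hvj]; intro h
        exact ha ((hinj a (mem_cons_self a s) j (mem_cons_of_mem hj) h) ▸ hj)
      obtain ⟨h1, h2⟩ := aux_add_ne hv_mul hv_add _ _ hfa hne hva
      refine ⟨h1, ?_⟩
      rcases min_cases (v (f a)) (v (∑ i ∈ s, f i)) with ⟨hm, _⟩ | ⟨hm, _⟩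
      · exact ⟨a, mem_cons_self a s, by rw [h2, hm]⟩
      · exact ⟨j, mem_cons_of_mem hj, by rw [h2, hm, hvj]⟩
    · have hse : s = ∅ := not_nonempty_iff_eq_empty.mp hsne
      subst hse
      simp only [Finset.sum_empty, add_zero]
      exact ⟨h0 a (mem_cons_self a ∅), a, mem_cons_self a ∅, rfl⟩

end aux

/-- **Torsion points of the Carlitz module lie in the disc `D_∞`.**
Let `E` be a valued extension of `K_∞` (additive `ℚ`-valued valuation `v`, `v θ = -1`)
carrying the Carlitz module `C` (determined by `C_θ = θ + τ`, `τ` the `q`-power map).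
If `λ ≠ 0` satisfies `C_a(λ) = 0` for some nonzero `a ∈ A = 𝔽_q[θ]`, then
`v(λ) > -q/(q-1)`. -/
theorem carlitz_torsion_in_disc
    (F : Type*) [Field F] [Fintype F] (q : ℕ) (hq : q = Fintype.card F)
    (E : Type*) [Field E] [Algebra F E] (v : E → ℚ)
    (hv_mul : ∀ x y : E, x ≠ 0 → y ≠ 0 → v (x * y) = v x + v y)
    (hv_add : ∀ x y : E, x ≠ 0 → y ≠ 0 → x + y ≠ 0 → min (v x) (v y) ≤ v (x + y))
    (θ : E) (hθ : v θ = -1)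
    (τ : Module.End F E) (hτ : ∀ x : E, τ x = x ^ q)
    (C : Polynomial F →ₐ[F] Module.End F E)
    (hC : C X = Algebra.lmul F E θ + τ)
    (a : Polynomial F) (ha : a ≠ 0)
    (lam : E) (hlam : lam ≠ 0) (htor : C a lam = 0) :
    -(q : ℚ) / ((q : ℚ) - 1) < v lam := by
  by_contra hcon
  push_neg at hcon
  have hq2 : 2 ≤ q := by rw [hq]; exact Fintype.one_lt_card
  have hqQ : (2 : ℚ) ≤ (q : ℚ) := by exact_mod_cast hq2
  have hvlam_neg : v lam < 0 :=
    lt_of_le_of_lt hcon (div_neg_of_neg_of_pos (by linarith) (by linarith))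
  set f : ℕ → E := fun i => ((C X) ^ i) lam with hf
  have key : ∀ i, f i ≠ 0 ∧ v (f i) = (q : ℚ) ^ i * v lam := by
    intro i
    induction i with
    | zero => simp [hf, hlam]
    | succ i ih =>
      obtain ⟨hne, hvi⟩ := ih
      have hstep : f (i + 1) = θ * f i + (f i) ^ q := by
        have h0 : f (i + 1) = (C X) (f i) := by
          show ((C X) ^ (i + 1)) lam = _
          rw [pow_succ', Module.End.mul_apply]
        rw [h0, hC, LinearMap.add_apply, hτ]
        rfl
      have hle : v (f i) ≤ v lam := by
        have h1 : (1 : ℚ) ≤ (q : ℚ) ^ i := one_le_pow₀ (by linarith)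
        nlinarith
      have hpow : v ((f i) ^ q) = (q : ℚ) * v (f i) := by
        simpa using aux_v_pow hv_mul _ hne q
      by_cases hθ0 : θ = 0
      · constructor
        · rw [hstep, hθ0, zero_mul, zero_add]; exact pow_ne_zero _ hne
        · rw [hstep, hθ0, zero_mul, zero_add, hpow, hvi, pow_succ]; ring
      · have hθf : θ * f i ≠ 0 := mul_ne_zero hθ0 hne
        have hvθf : v (θ * f i) = -1 + v (f i) := by rw [hv_mul _ _ hθ0 hne, hθ]
        have hlt : v ((f i) ^ q) < v (θ * f i) := by
          rw [hpow, hvθf]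
          have hm : v (f i) ≤ -(q : ℚ) / ((q : ℚ) - 1) := le_trans hle hcon
          have h1 : v (f i) * ((q : ℚ) - 1) ≤ -(q : ℚ) :=
            (le_div_iff₀ (by linarith)).mp hm
          nlinarith
        obtain ⟨h1, h2⟩ := aux_add_ne hv_mul hv_add _ _ hθf (pow_ne_zero _ hne)
          (ne_of_gt hlt)
        rw [← hstep] at h1 h2
        refine ⟨h1, ?_⟩
        rw [h2, min_eq_right hlt.le, hpow, hvi, pow_succ]; ring
  have hvF0 : ∀ c : F, c ≠ 0 → v (algebraMap F E c) = 0 := by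
    intro c hc
    have h1 : (algebraMap F E c) ^ (q - 1) = 1 := by
      rw [← map_pow, hq, FiniteField.pow_card_sub_one_eq_one c hc, map_one]
    have h2 : algebraMap F E c ≠ 0 := (map_ne_zero (algebraMap F E)).mpr hc
    have h3 := aux_v_pow hv_mul _ h2 (q - 1)
    rw [h1, aux_v_one hv_mul] at h3
    have h4 : ((q - 1 : ℕ) : ℚ) ≠ 0 := Nat.cast_ne_zero.mpr (by omega)
    exact ((mul_eq_zero.mp h3.symm).resolve_left h4)
  have expand : C a lam = ∑ i ∈ a.support, algebraMap F E (a.coeff i) * f i := by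
    conv_lhs => rw [a.as_sum_support]
    rw [map_sum, LinearMap.sum_apply]
    refine Finset.sum_congr rfl fun i hi => ?_
    rw [← smul_X_eq_monomial, map_smul, map_pow, LinearMap.smul_apply,
      Algebra.smul_def]
  have ht0 : ∀ i ∈ a.support, algebraMap F E (a.coeff i) * f i ≠ 0 := fun i hi =>
    mul_ne_zero ((map_ne_zero (algebraMap F E)).mpr (mem_support_iff.mp hi)) (key i).1
  have htv : ∀ i ∈ a.support,
      v (algebraMap F E (a.coeff i) * f i) = (q : ℚ) ^ i * v lam := by
    intro i hi
    rw [hv_mul _ _ ((map_ne_zero (algebraMap F E)).mpr (mem_support_iff.mp hi)) (key i).1,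
      hvF0 _ (mem_support_iff.mp hi), (key i).2, zero_add]
  have hinj : ∀ i ∈ a.support, ∀ j ∈ a.support,
      v (algebraMap F E (a.coeff i) * f i) = v (algebraMap F E (a.coeff j) * f j) → i = j := by
    intro i hi j hj h
    rw [htv i hi, htv j hj] at h
    have h2 : (q : ℚ) ^ i = (q : ℚ) ^ j := mul_right_cancel₀ (ne_of_lt hvlam_neg) h
    have h3 : q ^ i = q ^ j := by exact_mod_cast h2
    exact Nat.pow_right_injective hq2 h3
  obtain ⟨hne, -⟩ := aux_sum hv_mul hv_add a.support _ ht0 hinj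
    (nonempty_support_iff.mpr ha)
  rw [← expand, htor] at hne
  exact hne rfl
end

section
/- Let P be a monic irreducible polynomial in A = 𝔽_q[θ] of degree d. Then for all i ≥ 0: v_P(L_i) = ⌊i/d⌋ and v_P(D_i) = (q^i − q^{i − d⌊i/d⌋})/(q^d − 1), where v_P is the P-adic valuation, L_i = Π_{k=1}^i (θ − θ^{q^k}) and D_i = Π_{k=0}^{i-1} (θ^{q^i} − θ^{q^k}). -/
open Polynomial Finset

/-!
An irreducible `P` of degree `d` divides `X ^ q ^ n - X` exactly when `d ∣ n`, and never to the
second power because `X ^ q ^ n - X` is separable. Since `L (i + 1) = L i * (X - X ^ q ^ (i + 1))`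
and, by the Frobenius, `D (i + 1) = (X ^ q ^ (i + 1) - X) * D i ^ q`, both valuations grow by
`[d ∣ i + 1]` at each step (after multiplying by `q` for `D`), which is also the recursion obeyed by
`⌊i / d⌋` and `(q ^ i - q ^ (i % d)) / (q ^ d - 1)`.
-/

namespace Nat

theorem pow_sub_one_dvd_pow_sub_pow_mod (q d i : ℕ) : q ^ d - 1 ∣ q ^ i - q ^ (i % d) := by
  have hsplit : q ^ i - q ^ (i % d) = q ^ (i % d) * (q ^ (d * (i / d)) - 1) := by
    rw [Nat.mul_sub, mul_one, ← pow_add, Nat.mod_add_div]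
  rw [hsplit]
  exact Dvd.dvd.mul_left (Nat.pow_sub_one_dvd_pow_sub_one q (dvd_mul_right d _)) _

theorem add_one_mod_of_dvd {d i : ℕ} (hd : 0 < d) (h : d ∣ i + 1) : i % d + 1 = d := by
  have h0 := Nat.mod_eq_zero_of_dvd h
  rw [← Nat.mod_add_mod] at h0
  refine le_antisymm (Nat.mod_lt i hd) (not_lt.mp fun hlt => ?_)
  rw [Nat.mod_eq_of_lt hlt] at h0
  omega

theorem add_one_mod_of_not_dvd {d i : ℕ} (h : ¬ d ∣ i + 1) : (i + 1) % d = i % d + 1 := by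
  rcases Nat.eq_zero_or_pos d with rfl | hd
  · simp
  have hlt : i % d + 1 < d := by
    refine lt_of_le_of_ne (Nat.mod_lt i hd) fun heq => h ?_
    rw [Nat.dvd_iff_mod_eq_zero, ← Nat.mod_add_mod, heq, Nat.mod_self]
  rw [← Nat.mod_add_mod, Nat.mod_eq_of_lt hlt]

theorem pow_add_one_sub_pow_mod {q d : ℕ} (hq : 0 < q) (hd : 0 < d) (i : ℕ) :
    q ^ (i + 1) - q ^ ((i + 1) % d) =
      (if d ∣ i + 1 then q ^ d - 1 else 0) + q * (q ^ i - q ^ (i % d)) := by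
  have hmul : q * (q ^ i - q ^ (i % d)) = q ^ (i + 1) - q ^ (i % d + 1) := by
    rw [Nat.mul_sub, pow_succ', pow_succ']
  rw [hmul]
  split_ifs with h
  · have hmod := add_one_mod_of_dvd hd h
    have : q ^ d ≤ q ^ (i + 1) := Nat.pow_le_pow_right hq (hmod ▸ Nat.add_le_add_right (Nat.mod_le i d) 1)
    have : 1 ≤ q ^ d := Nat.one_le_pow _ _ hq
    rw [hmod, Nat.mod_eq_zero_of_dvd h, pow_zero]
    omega
  · rw [add_one_mod_of_not_dvd h, zero_add]

theorem pow_add_one_sub_pow_mod_div {q d : ℕ} (hq : 1 < q) (hd : 0 < d) (i : ℕ) :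
    (q ^ (i + 1) - q ^ ((i + 1) % d)) / (q ^ d - 1) =
      (if d ∣ i + 1 then 1 else 0) + q * ((q ^ i - q ^ (i % d)) / (q ^ d - 1)) := by
  have hpos : 0 < q ^ d - 1 := Nat.sub_pos_of_lt (Nat.one_lt_pow hd.ne' hq)
  obtain ⟨t, ht⟩ := pow_sub_one_dvd_pow_sub_pow_mod q d i
  rw [pow_add_one_sub_pow_mod (by omega) hd, ht, Nat.mul_div_cancel_left _ hpos]
  split_ifs
  · rw [show q ^ d - 1 + q * ((q ^ d - 1) * t) = (q ^ d - 1) * (1 + q * t) by ring,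
      Nat.mul_div_cancel_left _ hpos]
  · rw [zero_add, zero_add, mul_left_comm, Nat.mul_div_cancel_left _ hpos]

end Nat

namespace FiniteField

variable (F : Type*) [Field F] [Fintype F]

noncomputable def carlitzL (i : ℕ) : F[X] :=
  ∏ k ∈ range i, (X - X ^ Fintype.card F ^ (k + 1))

noncomputable def carlitzD (i : ℕ) : F[X] :=
  ∏ k ∈ range i, (X ^ Fintype.card F ^ i - X ^ Fintype.card F ^ k)

theorem carlitzL_succ (i : ℕ) :
    carlitzL F (i + 1) = carlitzL F i * (X - X ^ Fintype.card F ^ (i + 1)) :=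
  prod_range_succ _ i

theorem carlitzD_succ (i : ℕ) :
    carlitzD F (i + 1) = (X ^ Fintype.card F ^ (i + 1) - X) * carlitzD F i ^ Fintype.card F := by
  rw [carlitzD, prod_range_succ', carlitzD, ← prod_pow, pow_zero, pow_one, mul_comm]
  congr 1
  refine prod_congr rfl fun k _ => ?_
  rw [← expand_card]
  simp only [map_sub, map_pow, expand_X, ← pow_mul, pow_succ, mul_comm]

variable {F}

theorem squarefree_X_pow_card_pow_sub_X {n : ℕ} (hn : n ≠ 0) :
    Squarefree (X ^ Fintype.card F ^ n - X : F[X]) :=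
  (galois_poly_separable (ringChar F) _
    (dvd_pow (ringChar.dvd (Nat.cast_card_eq_zero F)) hn)).squarefree

theorem _root_.Irreducible.emultiplicity_X_pow_card_pow_sub_X {P : F[X]} (hP : Irreducible P)
    {n : ℕ} (hn : n ≠ 0) :
    emultiplicity P (X ^ Fintype.card F ^ n - X) = if P.natDegree ∣ n then 1 else 0 := by
  have hdvd_iff := Nat.card_eq_fintype_card (α := F) ▸
    hP.natDegree_dvd_iff_dvd_X_pow_card_pow_sub_X (n := n)
  split_ifs with h
  · rw [← Nat.cast_one, emultiplicity_eq_coe, pow_one]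
    exact ⟨hdvd_iff.mp h, fun hsq =>
      hP.not_isUnit (squarefree_X_pow_card_pow_sub_X hn P (by rwa [← sq]))⟩
  · exact emultiplicity_eq_zero.mpr (mt hdvd_iff.mpr h)

theorem emultiplicity_carlitzL {P : F[X]} (hP : Irreducible P) (i : ℕ) :
    emultiplicity P (carlitzL F i) = ↑(i / P.natDegree) := by
  induction i with
  | zero => simp [carlitzL, emultiplicity_of_one_right hP.not_isUnit]
  | succ i ih =>
    rw [carlitzL_succ, emultiplicity_mul hP.prime, ih, ← neg_sub, emultiplicity_neg,
      hP.emultiplicity_X_pow_card_pow_sub_X i.succ_ne_zero, Nat.succ_div]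
    split_ifs <;> simp

theorem emultiplicity_carlitzD {P : F[X]} (hP : Irreducible P) (i : ℕ) :
    emultiplicity P (carlitzD F i) =
      ↑((Fintype.card F ^ i - Fintype.card F ^ (i % P.natDegree)) /
        (Fintype.card F ^ P.natDegree - 1)) := by
  induction i with
  | zero => simp [carlitzD, emultiplicity_of_one_right hP.not_isUnit]
  | succ i ih =>
    rw [carlitzD_succ, emultiplicity_mul hP.prime, emultiplicity_pow hP.prime, ih,
      hP.emultiplicity_X_pow_card_pow_sub_X i.succ_ne_zero,
      Nat.pow_add_one_sub_pow_mod_div Fintype.one_lt_card hP.natDegree_pos]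
    split_ifs <;> simp

end FiniteField

theorem carlitz_factorial_padic_valuation_general
    (F : Type*) [Field F] [Fintype F] (q : ℕ) (hq : q = Fintype.card F)
    (P : Polynomial F) (hirr : Irreducible P)
    (L D : ℕ → Polynomial F)
    (hL : ∀ i : ℕ, L i = ∏ k ∈ Finset.range i, (X - X ^ q ^ (k + 1)))
    (hD : ∀ i : ℕ, D i = ∏ k ∈ Finset.range i, (X ^ q ^ i - X ^ q ^ k)) :
    ∀ i : ℕ,
      (P ^ (i / P.natDegree) ∣ L i ∧ ¬ P ^ (i / P.natDegree + 1) ∣ L i) ∧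
      (P ^ ((q ^ i - q ^ (i % P.natDegree)) / (q ^ P.natDegree - 1)) ∣ D i ∧
        ¬ P ^ ((q ^ i - q ^ (i % P.natDegree)) / (q ^ P.natDegree - 1) + 1) ∣ D i) := by
  subst hq
  obtain rfl : L = FiniteField.carlitzL F := funext hL
  obtain rfl : D = FiniteField.carlitzD F := funext hD
  intro i
  rw [← emultiplicity_eq_coe, ← emultiplicity_eq_coe]
  exact ⟨FiniteField.emultiplicity_carlitzL hirr i, FiniteField.emultiplicity_carlitzD hirr i⟩

/-- **`P`-adic valuations of the Carlitz factorials.**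
For `P` monic irreducible of degree `d` in `A = 𝔽_q[θ]`,
`v_P(L_i) = ⌊i/d⌋` and `v_P(D_i) = (q^i - q^{i mod d})/(q^d - 1)`, where
`L_i = ∏_{k=1}^{i} (θ - θ^{q^k})` and `D_i = ∏_{k=0}^{i-1} (θ^{q^i} - θ^{q^k})`
(the valuation `v_P` being expressed by exact divisibility by powers of `P`). -/
theorem carlitz_factorial_padic_valuation
    (F : Type*) [Field F] [Fintype F] (q : ℕ) (hq : q = Fintype.card F)
    (P : Polynomial F) (hP : P.Monic) (hirr : Irreducible P)
    (L D : ℕ → Polynomial F)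
    (hL : ∀ i : ℕ, L i = ∏ k ∈ Finset.range i, (X - X ^ q ^ (k + 1)))
    (hD : ∀ i : ℕ, D i = ∏ k ∈ Finset.range i, (X ^ q ^ i - X ^ q ^ k)) :
    ∀ i : ℕ,
      (P ^ (i / P.natDegree) ∣ L i ∧ ¬ P ^ (i / P.natDegree + 1) ∣ L i) ∧
      (P ^ ((q ^ i - q ^ (i % P.natDegree)) / (q ^ P.natDegree - 1)) ∣ D i ∧
        ¬ P ^ ((q ^ i - q ^ (i % P.natDegree)) / (q ^ P.natDegree - 1) + 1) ∣ D i) :=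
  carlitz_factorial_padic_valuation_general F q hq P hirr L D hL hD
end

section
/- The z-deformed exponential exp_C̃ = Σ_{i≥0} (z^i/D_i) τ^i is injective on 𝕃_∞ = L ⊗_K 𝔽_q(z)((1/θ)), i.e., its kernel as an 𝔽_q(z)-linear map 𝕃_∞ → 𝕃_∞ is zero. -/
/-!
Since `exp` is additive, it suffices to show that `exp x = 0` forces `x = 0`. Suppose not, let `c`
be the valuation `w x` and pick `R > max c 0`. Density provides a unit `G` of `𝔽_q(z)` and a
Tate-algebra element `S = ∑ λⱼ zʲ` with `w (x G - S) ≥ R`; hence `w S = c`, and `w λⱼ ≥ c` by the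
Gauss norm. As `exp (x G) = G exp x = 0` and `exp` does not lower nonnegative valuations,
`exp S = ∑ zʲ exp λⱼ = -exp (x G - S)` has valuation `≥ R`, and cutting every `exp λⱼ` off after
`M ≥ R - c` terms changes it by valuation `≥ R`. The coefficient of `zⁿ` in what remains is
`λₙ + ∑_{i ≥ 1} τⁱ(λ_{n-i}) / Dᵢ`, of valuation `≥ R` by the Gauss norm again; since
`w (τⁱ y / Dᵢ) = qⁱ (w y + i)`, induction on `n` gives `w λₙ ≥ R`, so `c = w S ≥ R`: a contradiction.
-/

open Polynomial

/-- `f` tends to `s` with respect to the (additive, `ℚ`-valued) valuation `v`. -/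
def VTendsto {E : Type*} [Ring E] (v : E → ℚ) (f : ℕ → E) (s : E) : Prop :=
  ∀ r : ℚ, ∃ N : ℕ, ∀ n : ℕ, N ≤ n → (f n - s = 0 ∨ r ≤ v (f n - s))

open Filter Finset

section Convolution

variable {R : Type*}

def convCoeff [AddCommMonoid R] (A : ℕ → R → R) (lam : ℕ → R) (N M n : ℕ) : R :=
  ∑ p ∈ range N ×ˢ range M with p.1 + p.2 = n, A p.2 (lam p.1)

theorem sum_pow_mul_sum_pow_mul_eq_sum_convCoeff [CommSemiring R] (z : R) (A : ℕ → R → R)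
    (lam : ℕ → R) (N M : ℕ) :
    ∑ j ∈ range N, z ^ j * ∑ i ∈ range M, z ^ i * A i (lam j) =
      ∑ n ∈ range (N + M), convCoeff A lam N M n * z ^ n := by
  have hfiber : ∀ n, convCoeff A lam N M n * z ^ n =
      ∑ p ∈ range N ×ˢ range M with p.1 + p.2 = n, z ^ (p.1 + p.2) * A p.2 (lam p.1) := by
    intro n
    rw [convCoeff, sum_mul]
    refine sum_congr rfl fun p hp => ?_
    rw [(mem_filter.1 hp).2, mul_comm]
  simp only [hfiber]
  rw [sum_fiberwise_of_maps_to fun p hp => ?_, sum_product]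
  · refine sum_congr rfl fun j _ => ?_
    rw [mul_sum]
    refine sum_congr rfl fun i _ => ?_
    ring
  · simp only [mem_product, mem_range] at hp ⊢
    omega

end Convolution

namespace AddValuation

section OfNeZero

variable {K : Type*} [Field K]

open Classical in
/-- The value of `v` at `0` is ignored: `0` is sent to `⊤`. -/
noncomputable def ofNeZero (v : K → ℚ)
    (hmul : ∀ x y : K, x ≠ 0 → y ≠ 0 → v (x * y) = v x + v y)
    (hadd : ∀ x y : K, x ≠ 0 → y ≠ 0 → x + y ≠ 0 → min (v x) (v y) ≤ v (x + y)) :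
    AddValuation K (WithTop ℚ) :=
  AddValuation.of (fun x => if x = 0 then ⊤ else (v x : WithTop ℚ)) (if_pos rfl)
    (by
      have h := hmul 1 1 one_ne_zero one_ne_zero
      simp only [one_ne_zero, if_false, mul_one] at h ⊢
      exact_mod_cast (by linarith : v 1 = 0))
    (fun x y => by
      by_cases hx : x = 0
      · simp [hx]
      by_cases hy : y = 0
      · simp [hy]
      by_cases hxy : x + y = 0
      · simp [hxy]
      simp only [if_neg hx, if_neg hy, if_neg hxy]
      exact_mod_cast hadd x y hx hy hxy)
    (fun x y => by
      by_cases hx : x = 0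
      · simp [hx]
      by_cases hy : y = 0
      · simp [hy]
      simp only [if_neg hx, if_neg hy, if_neg (mul_ne_zero hx hy)]
      exact_mod_cast hmul x y hx hy)

variable {v : K → ℚ} {hmul : ∀ x y : K, x ≠ 0 → y ≠ 0 → v (x * y) = v x + v y}
  {hadd : ∀ x y : K, x ≠ 0 → y ≠ 0 → x + y ≠ 0 → min (v x) (v y) ≤ v (x + y)}

theorem ofNeZero_apply_of_ne_zero {x : K} (hx : x ≠ 0) : ofNeZero v hmul hadd x = v x :=
  if_neg hx

theorem coe_le_ofNeZero_iff {r : ℚ} {x : K} :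
    (r : WithTop ℚ) ≤ ofNeZero v hmul hadd x ↔ x = 0 ∨ r ≤ v x := by
  by_cases hx : x = 0
  · simp [hx, ofNeZero]
  · simp [ofNeZero_apply_of_ne_zero hx, hx]

theorem ofNeZero_le_ofNeZero {x y : K} (hxy : x = 0 → y = 0) (h : x ≠ 0 → y ≠ 0 → v x ≤ v y) :
    ofNeZero v hmul hadd x ≤ ofNeZero v hmul hadd y := by
  by_cases hy : y = 0
  · simp [hy, ofNeZero]
  have hx : x ≠ 0 := fun hx => hy (hxy hx)
  rw [ofNeZero_apply_of_ne_zero hx, ofNeZero_apply_of_ne_zero hy, WithTop.coe_le_coe]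
  exact h hx hy

theorem ofNeZero_map_eq_mul {τ : K →+* K} {q : ℕ} (hτ : ∀ x : K, x ≠ 0 → v (τ x) = q * v x)
    (x : K) (a : ℚ) (hx : ofNeZero v hmul hadd x = a) :
    ofNeZero v hmul hadd (τ x) = ((q * a : ℚ) : WithTop ℚ) := by
  have hx0 : x ≠ 0 := by
    rintro rfl
    simp at hx
  rw [ofNeZero_apply_of_ne_zero hx0, WithTop.coe_inj] at hx
  rw [ofNeZero_apply_of_ne_zero ((map_ne_zero τ).2 hx0), hτ x hx0, hx]

end OfNeZero

section Ring

variable {R : Type*} [Ring R]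

theorem map_le_of_map_le_convCoeff {Γ₀ : Type*} [LinearOrderedAddCommGroupWithTop Γ₀]
    (w : AddValuation R Γ₀) {A : ℕ → R → R} {lam : ℕ → R} {N M : ℕ} {g : Γ₀} (hM : 0 < M)
    (hA0 : ∀ x, A 0 x = x) (hA : ∀ i x, g ≤ w x → g ≤ w (A i x))
    (h : ∀ n < N, g ≤ w (convCoeff A lam N M n)) : ∀ j < N, g ≤ w (lam j) := by
  intro j
  induction j using Nat.strong_induction_on with
  | _ j ih =>
  intro hj
  have hmem : (j, 0) ∈ (range N ×ˢ range M).filter (fun p => p.1 + p.2 = j) := by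
    simp [hj, hM]
  have hsplit := eq_sub_of_add_eq (add_sum_erase _ (fun p : ℕ × ℕ => A p.2 (lam p.1)) hmem)
  rw [hA0] at hsplit
  rw [hsplit]
  refine w.map_le_sub (h j hj) (w.map_le_sum fun p hp => hA _ _ (ih _ ?_ ?_))
  all_goals
    obtain ⟨hne, hp⟩ := mem_erase.1 hp
    simp only [mem_filter, mem_product, mem_range] at hp
    have : p.2 ≠ 0 := fun h0 => hne (Prod.ext (by omega) h0)
    omega

def HasLimit (w : AddValuation R (WithTop ℚ)) (f : ℕ → R) (s : R) : Prop :=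
  ∀ r : ℚ, ∀ᶠ n in atTop, (r : WithTop ℚ) ≤ w (f n - s)

theorem hasLimit_ofNeZero_iff {K : Type*} [Field K] {v : K → ℚ}
    {hmul : ∀ x y : K, x ≠ 0 → y ≠ 0 → v (x * y) = v x + v y}
    {hadd : ∀ x y : K, x ≠ 0 → y ≠ 0 → x + y ≠ 0 → min (v x) (v y) ≤ v (x + y)}
    {f : ℕ → K} {s : K} :
    (ofNeZero v hmul hadd).HasLimit f s ↔ VTendsto v f s := by
  simp only [HasLimit, VTendsto, coe_le_ofNeZero_iff, eventually_atTop]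

variable {w : AddValuation R (WithTop ℚ)} {f g : ℕ → R} {s t : R}

theorem HasLimit.add (hf : w.HasLimit f s) (hg : w.HasLimit g t) :
    w.HasLimit (f + g) (s + t) := fun r => by
  filter_upwards [hf r, hg r] with n hfn hgn
  rw [Pi.add_apply, add_sub_add_comm]
  exact w.map_le_add hfn hgn

theorem HasLimit.coe_le_sub (hf : w.HasLimit f s) {B : ℚ} {c : R}
    (h : ∀ᶠ n in atTop, (B : WithTop ℚ) ≤ w (f n - c)) : (B : WithTop ℚ) ≤ w (s - c) := by
  obtain ⟨n, hfn, hn⟩ := ((hf B).and h).exists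
  rw [← sub_sub_sub_cancel_left c s (f n)]
  exact w.map_le_sub hn hfn

end Ring

section Field

variable {K : Type*} [Field K] {w : AddValuation K (WithTop ℚ)} {f : ℕ → K} {s t : K}

theorem eq_zero_of_forall_coe_le {x : K} (h : ∀ r : ℚ, (r : WithTop ℚ) ≤ w x) : x = 0 := by
  by_contra hx
  obtain ⟨a, ha⟩ := WithTop.ne_top_iff_exists.1 (w.ne_top_iff.2 hx)
  have := h (a + 1)
  rw [← ha, WithTop.coe_le_coe] at this
  linarith

theorem HasLimit.unique (hs : w.HasLimit f s) (ht : w.HasLimit f t) : s = t := by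
  refine sub_eq_zero.1 (eq_zero_of_forall_coe_le (w := w) fun r => ?_)
  obtain ⟨n, hsn, htn⟩ := ((hs r).and (ht r)).exists
  rw [← sub_sub_sub_cancel_left t s (f n)]
  exact w.map_le_sub htn hsn

theorem HasLimit.const_mul (hf : w.HasLimit f s) (c : K) :
    w.HasLimit (fun n => c * f n) (c * s) := by
  rcases eq_or_ne c 0 with rfl | hc
  · intro r
    simp
  obtain ⟨a, ha⟩ := WithTop.ne_top_iff_exists.1 (w.ne_top_iff.2 hc)
  intro r
  filter_upwards [hf (r - a)] with n hn
  rw [← mul_sub, w.map_mul, ← ha]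
  calc (r : WithTop ℚ) = a + ((r - a : ℚ) : WithTop ℚ) := by norm_cast; ring
    _ ≤ a + w (f n - s) := by gcongr

variable (w)

theorem map_prod {ι : Type*} (s : Finset ι) (f : ι → K) : w (∏ i ∈ s, f i) = ∑ i ∈ s, w (f i) := by
  classical
  induction s using Finset.induction_on with
  | empty => simp
  | insert a s ha ih => rw [prod_insert ha, sum_insert ha, w.map_mul, ih]

theorem eq_zero_or_map_prod_sub_pow_pow {θ : K} (hθ : θ = 0 ∨ w θ = ((-1 : ℚ) : WithTop ℚ))
    {q : ℕ} (hq : 1 < q) (i : ℕ) :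
    ∏ k ∈ range i, (θ ^ q ^ i - θ ^ q ^ k) = 0 ∨
      w (∏ k ∈ range i, (θ ^ q ^ i - θ ^ q ^ k)) = ((-(i * q ^ i) : ℚ) : WithTop ℚ) := by
  rcases hθ with rfl | hθ
  · rcases Nat.eq_zero_or_pos i with rfl | hi
    · simp
    · exact Or.inl (prod_eq_zero (mem_range.2 hi) (by simp [(zero_lt_one.trans hq).ne']))
  have hpow : ∀ m, w (θ ^ q ^ m) = ((-(q ^ m) : ℚ) : WithTop ℚ) := fun m => by
    rw [w.map_pow, hθ, ← WithTop.coe_nsmul, nsmul_eq_mul]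
    congr 1
    push_cast
    ring
  have hfactor : ∀ k ∈ range i, w (θ ^ q ^ i - θ ^ q ^ k) = ((-(q ^ i) : ℚ) : WithTop ℚ) :=
    fun k hk => by
      rw [w.map_sub_eq_of_lt_left, hpow]
      rw [hpow, hpow, WithTop.coe_lt_coe, neg_lt_neg_iff]
      exact pow_lt_pow_right₀ (by exact_mod_cast hq) (mem_range.1 hk)
  right
  rw [w.map_prod, sum_congr rfl hfactor, sum_const, card_range, ← WithTop.coe_nsmul,
    nsmul_eq_mul]
  congr 1
  ring

theorem map_iterate_eq_pow_mul {τ : K →+* K} {q : ℕ}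
    (hτ : ∀ (x : K) (a : ℚ), w x = a → w (τ x) = ((q * a : ℚ) : WithTop ℚ)) {x : K} {a : ℚ}
    (hx : w x = a) (i : ℕ) : w ((⇑τ)^[i] x) = ((q ^ i * a : ℚ) : WithTop ℚ) := by
  induction i with
  | zero => simpa using hx
  | succ i ih =>
    rw [Function.iterate_succ_apply', hτ _ _ ih, pow_succ, mul_comm _ (q : ℚ), mul_assoc]

end Field

end AddValuation

open AddValuation

theorem exists_lt_pow_eq_pow_of_isIntegral {F A : Type*} [Field F] [Finite F] [CommRing A]
    [Algebra F A] {z : A} (hz : IsIntegral F z) : ∃ m n : ℕ, m < n ∧ z ^ m = z ^ n := by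
  have : Module.Finite F (Algebra.adjoin F {z}) := Module.Finite.iff_fg.2 hz.fg_adjoin_singleton
  have : Finite (Algebra.adjoin F {z}) := Module.finite_of_finite F
  obtain ⟨m, n, hmn, heq⟩ := Finite.exists_ne_map_eq_of_infinite fun k : ℕ =>
    (⟨z ^ k, pow_mem (Algebra.self_mem_adjoin_singleton F z) k⟩ : Algebra.adjoin F {z})
  rcases hmn.lt_or_gt with h | h
  · exact ⟨m, n, h, congrArg Subtype.val heq⟩
  · exact ⟨n, m, h, (congrArg Subtype.val heq).symm⟩

theorem transcendental_of_forall_sum_eq_zero {F K : Type*} [Field F] [Finite F] [CommRing K]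
    [Nontrivial K] [Algebra F K] (E : Subring K) {z : K}
    (hzero : ∀ (N : ℕ) (lam : ℕ → K), (∀ j, lam j ∈ E) →
      ∑ j ∈ range N, lam j * z ^ j = 0 → ∀ j < N, lam j = 0) :
    Transcendental F z := by
  intro halg
  obtain ⟨m, n, hmn, hpow⟩ := exists_lt_pow_eq_pow_of_isIntegral halg.isIntegral
  let lam : ℕ → K := fun j => (if j = n then 1 else 0) - (if j = m then 1 else 0)
  have hlamE : ∀ j, lam j ∈ E := fun j =>
    sub_mem (by split_ifs <;> simp) (by split_ifs <;> simp)
  have hsum : ∑ j ∈ range (n + 1), lam j * z ^ j = 0 := by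
    simp [lam, sub_mul, sum_sub_distrib, ite_mul, hpow, hmn.trans (Nat.lt_succ_self n)]
  have := hzero (n + 1) lam hlamE hsum n (Nat.lt_succ_self n)
  simp [lam, hmn.ne'] at this

section Exponential

variable {K : Type*} [Field K]

def expPartialSum (τ : K →+* K) (z : K) (D : ℕ → K) (x : K) (n : ℕ) : K :=
  ∑ i ∈ range n, z ^ i * (⇑τ)^[i] x / D i

/-- In the application `w (τⁱ x / Dᵢ) = qⁱ (w x + i)`. -/
def RaisesValuation (w : AddValuation K (WithTop ℚ)) (τ : K →+* K) (D : ℕ → K) : Prop :=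
  ∀ (i : ℕ) (c : ℚ) (x : K), 0 ≤ c + i → (c : WithTop ℚ) ≤ w x →
    ((c + i : ℚ) : WithTop ℚ) ≤ w ((⇑τ)^[i] x / D i)

variable {w : AddValuation K (WithTop ℚ)} {τ : K →+* K} {z : K} {D : ℕ → K}

theorem raisesValuation_of_map_eq_mul {q : ℕ} (hq : 1 ≤ q)
    (hτ : ∀ (x : K) (a : ℚ), w x = a → w (τ x) = ((q * a : ℚ) : WithTop ℚ))
    (hD : ∀ i, D i = 0 ∨ w (D i) = ((-(i * q ^ i) : ℚ) : WithTop ℚ)) :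
    RaisesValuation w τ D := by
  intro i c x hci hcx
  rcases hD i with hD0 | hDi
  · simp [hD0]
  rcases eq_or_ne x 0 with rfl | hx
  · simp
  obtain ⟨a, ha⟩ := WithTop.ne_top_iff_exists.1 (w.ne_top_iff.2 hx)
  rw [w.map_div, hDi, w.map_iterate_eq_pow_mul hτ ha.symm,
    ← WithTop.LinearOrderedAddCommGroup.coe_sub, WithTop.coe_le_coe]
  rw [← ha, WithTop.coe_le_coe] at hcx
  have hq1 : (1 : ℚ) ≤ (q : ℚ) ^ i := one_le_pow₀ (by exact_mod_cast hq)
  nlinarith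

theorem expPartialSum_add (x y : K) :
    expPartialSum τ z D (x + y) = expPartialSum τ z D x + expPartialSum τ z D y := by
  ext n
  simp only [expPartialSum, Pi.add_apply, iterate_map_add, mul_add, add_div, sum_add_distrib]

theorem expPartialSum_mul_of_apply_eq {c : K} (hc : τ c = c) (x : K) :
    expPartialSum τ z D (c * x) = fun n => c * expPartialSum τ z D x n := by
  ext n
  simp only [expPartialSum, iterate_map_mul, Function.iterate_fixed hc, mul_sum]
  refine sum_congr rfl fun i _ => ?_
  ring

variable {e : K → K}

theorem map_add_of_hasLimit (he : ∀ x, w.HasLimit (expPartialSum τ z D x) (e x)) (x y : K) :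
    e (x + y) = e x + e y :=
  (he (x + y)).unique (by rw [expPartialSum_add]; exact (he x).add (he y))

theorem map_mul_of_hasLimit (he : ∀ x, w.HasLimit (expPartialSum τ z D x) (e x)) {c : K}
    (hc : τ c = c) (x : K) : e (c * x) = c * e x :=
  (he (c * x)).unique (by rw [expPartialSum_mul_of_apply_eq hc]; exact (he x).const_mul c)

theorem coe_le_val_sub_expPartialSum (hz : w z = 0) (hA : RaisesValuation w τ D) {x y : K}
    (he : w.HasLimit (expPartialSum τ z D x) y) {c : ℚ} (hx : (c : WithTop ℚ) ≤ w x) {M : ℕ}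
    (hM : 0 ≤ c + M) : ((c + M : ℚ) : WithTop ℚ) ≤ w (y - expPartialSum τ z D x M) := by
  refine he.coe_le_sub (eventually_atTop.2 ⟨M, fun n hn => ?_⟩)
  rw [expPartialSum, expPartialSum, ← sum_Ico_eq_sub _ hn]
  refine w.map_le_sum fun i hi => ?_
  have hMi : (M : ℚ) ≤ i := by exact_mod_cast (mem_Ico.1 hi).1
  rw [mul_div_assoc, w.map_mul, w.map_pow, hz, nsmul_zero, zero_add]
  refine le_trans ?_ (hA i c x (by linarith) hx)
  exact_mod_cast (by linarith : c + M ≤ c + i)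

theorem coe_le_val_of_hasLimit (hz : w z = 0) (hA : RaisesValuation w τ D) {x y : K}
    (he : w.HasLimit (expPartialSum τ z D x) y) {c : ℚ} (hc : 0 ≤ c)
    (hx : (c : WithTop ℚ) ≤ w x) : (c : WithTop ℚ) ≤ w y := by
  simpa [expPartialSum] using coe_le_val_sub_expPartialSum hz hA he hx (M := 0) (by simpa)

theorem coe_le_val_sum_convCoeff (hz : w z = 0) (hA : RaisesValuation w τ D)
    (he : ∀ x, w.HasLimit (expPartialSum τ z D x) (e x)) {lam : ℕ → K} {N M : ℕ} {c R : ℚ}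
    (hlam : ∀ j < N, (c : WithTop ℚ) ≤ w (lam j)) (hR0 : 0 ≤ R) (hRM : R ≤ c + M)
    (heS : (R : WithTop ℚ) ≤ w (∑ j ∈ range N, z ^ j * e (lam j))) :
    (R : WithTop ℚ) ≤
      w (∑ n ∈ range (N + M), convCoeff (fun i y => (⇑τ)^[i] y / D i) lam N M n * z ^ n) := by
  have htail : (R : WithTop ℚ) ≤
      w (∑ j ∈ range N, z ^ j * (e (lam j) - expPartialSum τ z D (lam j) M)) := by
    refine w.map_le_sum fun j hj => ?_
    rw [w.map_mul, w.map_pow, hz, nsmul_zero, zero_add]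
    exact le_trans (by exact_mod_cast hRM)
      (coe_le_val_sub_expPartialSum hz hA (he _) (hlam j (mem_range.1 hj)) (by linarith))
  rw [← sum_pow_mul_sum_pow_mul_eq_sum_convCoeff]
  convert w.map_le_sub heS htail using 2
  rw [← sum_sub_distrib]
  refine sum_congr rfl fun j _ => ?_
  simp only [expPartialSum, mul_div_assoc]
  ring

theorem eq_zero_of_exp_eq_zero {E : Subfield K} (hz : w z = 0) (hτz : τ z = z) (hD0 : D 0 = 1)
    (hA : RaisesValuation w τ D) (hAE : ∀ i, ∀ x ∈ E, (⇑τ)^[i] x / D i ∈ E)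
    (hGauss : ∀ (N : ℕ) (lam : ℕ → K), (∀ j, lam j ∈ E) →
      ∀ j < N, w (∑ j ∈ range N, lam j * z ^ j) ≤ w (lam j))
    (hdense : ∀ (x : K) (r : ℚ), ∃ (N : ℕ) (lam : ℕ → K) (G : K), (∀ j, lam j ∈ E) ∧
      w G = 0 ∧ τ G = G ∧ (r : WithTop ℚ) ≤ w (x * G - ∑ j ∈ range N, lam j * z ^ j))
    (e : K →+ K) (he : ∀ x, w.HasLimit (expPartialSum τ z D x) (e x)) {x : K} (hx : e x = 0) :
    x = 0 := by
  by_contra hx0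
  obtain ⟨c, hc⟩ := WithTop.ne_top_iff_exists.1 (w.ne_top_iff.2 hx0)
  set R : ℚ := max 0 (c + 1)
  set M : ℕ := ⌈R - c⌉₊
  have hR0 : 0 ≤ R := le_max_left _ _
  have hcR : c < R := lt_max_of_lt_right (lt_add_one c)
  have hRM : R ≤ c + M := by linarith [Nat.le_ceil (R - c)]
  obtain ⟨N, lam, G, hlamE, hG, hτG, happrox⟩ := hdense x R
  set S := ∑ j ∈ range N, lam j * z ^ j
  have hxG : w (x * G) = c := by rw [w.map_mul, hG, add_zero, hc]
  have hS : w S = c := by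
    rw [← hxG]
    refine w.map_eq_of_lt_sub ?_
    rw [w.map_sub_swap, hxG]
    exact lt_of_lt_of_le (by exact_mod_cast hcR) happrox
  have hlam : ∀ j < N, (c : WithTop ℚ) ≤ w (lam j) := fun j hj => hS ▸ hGauss N lam hlamE j hj
  have heS : (R : WithTop ℚ) ≤ w (∑ j ∈ range N, z ^ j * e (lam j)) := by
    have : ∑ j ∈ range N, z ^ j * e (lam j) = -e (x * G - S) := by
      rw [_root_.map_sub, mul_comm x G, map_mul_of_hasLimit he hτG, hx, mul_zero, zero_sub,
        neg_neg, map_sum]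
      refine sum_congr rfl fun j _ => ?_
      rw [mul_comm (lam j), map_mul_of_hasLimit he (by rw [_root_.map_pow, hτz])]
    rw [this, w.map_neg]
    exact coe_le_val_of_hasLimit hz hA (he _) hR0 happrox
  set μ := convCoeff (fun i y => (⇑τ)^[i] y / D i) lam N M
  have hμ := coe_le_val_sum_convCoeff hz hA he hlam hR0 hRM heS
  have hμE : ∀ n, μ n ∈ E := fun n => sum_mem fun p _ => hAE _ _ (hlamE _)
  have hlamR := w.map_le_of_map_le_convCoeff (A := fun i y => (⇑τ)^[i] y / D i)
    (Nat.ceil_pos.2 (by linarith)) (fun y => by simp [hD0])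
    (fun i y hy => le_trans (by exact_mod_cast (by linarith : R ≤ R + i))
      (hA i R y (by positivity) hy))
    (fun n hn => hμ.trans (hGauss _ μ hμE n (by omega)))
  have hSR : (R : WithTop ℚ) ≤ w S := w.map_le_sum fun j hj => by
    rw [w.map_mul, w.map_pow, hz, nsmul_zero, add_zero]
    exact hlamR j (mem_range.1 hj)
  rw [hS, WithTop.coe_le_coe] at hSR
  linarith

end Exponential

/-- **Injectivity of the `z`-deformed Carlitz exponential on `𝕃_∞`.**
A component of `𝕃_∞ = L ⊗_K 𝔽_q(z)((1/θ))` is modeled by a valued field `𝔼`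
(valuation `v`, `v θ = -1`), containing the completion `E` of the corresponding
component of `L ⊗ K_∞` and the element `z`, such that the `𝔽_q(z)`-span of the Tate
algebra `E⟨z⟩` is `v`-dense in `𝔼` and carries the Gauss norm; `τ` is the continuous
`𝔽_q(z)`-algebra endomorphism restricting to `x ↦ x^q` on `E`.  Then the
exponential `exp_C̃ (x) = ∑ z^i τ^i(x)/D_i` is injective. -/
theorem zdeformation_exponential_injective
    (F : Type*) [Field F] [Fintype F] (q : ℕ) (hq : q = Fintype.card F)
    (𝔼 : Type*) [Field 𝔼] [Algebra F 𝔼] (v : 𝔼 → ℚ)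
    (hv_mul : ∀ x y : 𝔼, x ≠ 0 → y ≠ 0 → v (x * y) = v x + v y)
    (hv_add : ∀ x y : 𝔼, x ≠ 0 → y ≠ 0 → x + y ≠ 0 → min (v x) (v y) ≤ v (x + y))
    (E : Subfield 𝔼) (θ z : 𝔼) (hθE : θ ∈ E) (hθ : v θ = -1)
    (hz : ∀ g : Polynomial F, g ≠ 0 → v (Polynomial.aeval z g) = 0)
    (τ : 𝔼 →+* 𝔼)
    (hτE : ∀ x ∈ E, τ x ∈ E ∧ τ x = x ^ q)
    (hτz : τ z = z)
    (hτF : ∀ γ : F, τ (algebraMap F 𝔼 γ) = algebraMap F 𝔼 γ)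
    (hτv : ∀ x : 𝔼, x ≠ 0 → v (τ x) = q * v x)
    (hdense : ∀ x : 𝔼, ∀ r : ℚ, ∃ (N : ℕ) (lam : ℕ → 𝔼) (g : Polynomial F),
      (∀ j, lam j ∈ E) ∧ g ≠ 0 ∧
      (x * Polynomial.aeval z g - ∑ j ∈ Finset.range N, lam j * z ^ j = 0 ∨
        r ≤ v (x * Polynomial.aeval z g - ∑ j ∈ Finset.range N, lam j * z ^ j)))
    (hGauss : ∀ (N : ℕ) (lam : ℕ → 𝔼), (∀ j, lam j ∈ E) →
      ∀ j < N, lam j ≠ 0 → v (∑ j ∈ Finset.range N, lam j * z ^ j) ≤ v (lam j))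
    (hzero : ∀ (N : ℕ) (lam : ℕ → 𝔼), (∀ j, lam j ∈ E) →
      (∑ j ∈ Finset.range N, lam j * z ^ j) = 0 → ∀ j < N, lam j = 0)
    (D : ℕ → 𝔼)
    (hD : ∀ i : ℕ, D i = ∏ k ∈ Finset.range i, (θ ^ q ^ i - θ ^ q ^ k))
    (expC : 𝔼 → 𝔼)
    (hexp : ∀ x : 𝔼,
      VTendsto v (fun N => ∑ i ∈ Finset.range N, z ^ i * (⇑τ)^[i] x / D i) (expC x)) :
    Function.Injective expC := by
  set w := ofNeZero v hv_mul hv_add with hw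
  have hq1 : 1 < q := hq ▸ Fintype.one_lt_card
  have hzt : Transcendental F z := transcendental_of_forall_sum_eq_zero E.toSubring hzero
  have hwG : ∀ g : F[X], g ≠ 0 → w (aeval z g) = 0 := fun g hg => by
    rw [hw, ofNeZero_apply_of_ne_zero fun h => hzt ⟨g, hg, h⟩, hz g hg, WithTop.coe_zero]
  have hτG : ∀ g : F[X], τ (aeval z g) = aeval z g := fun g =>
    (aeval_algHom_apply ({ τ with commutes' := hτF } : 𝔼 →ₐ[F] 𝔼) z g).symm.trans
      (congrArg (aeval · g) hτz)
  have hDw : ∀ i, D i = 0 ∨ w (D i) = ((-(i * q ^ i) : ℚ) : WithTop ℚ) := fun i => by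
    rw [hD]
    refine w.eq_zero_or_map_prod_sub_pow_pow ((eq_or_ne θ 0).imp_right fun hθ0 => ?_) hq1 i
    rw [hw, ofNeZero_apply_of_ne_zero hθ0, hθ]
  have he : ∀ x, w.HasLimit (expPartialSum τ z D x) (expC x) := fun x =>
    hasLimit_ofNeZero_iff.2 (hexp x)
  refine (injective_iff_map_eq_zero (AddMonoidHom.mk' expC (map_add_of_hasLimit he))).2
    fun x => eq_zero_of_exp_eq_zero (by simpa using hwG X X_ne_zero) hτz (by simp [hD])
      (raisesValuation_of_map_eq_mul hq1.le (ofNeZero_map_eq_mul hτv) hDw)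
      (fun i y hy => div_mem (Set.MapsTo.iterate (fun y hy => (hτE y hy).1) i hy) ?_)
      (fun N lam hlam j hj => ofNeZero_le_ofNeZero (fun hS => hzero N lam hlam hS j hj)
        fun _ h0 => hGauss N lam hlam j hj h0) (fun x r => ?_) _ he
  · rw [hD]
    exact prod_mem fun k _ => sub_mem (pow_mem hθE _) (pow_mem hθE _)
  · obtain ⟨N, lam, g, hlam, hg, happrox⟩ := hdense x r
    exact ⟨N, lam, aeval z g, hlam, hwG g hg, hτG g, coe_le_ofNeZero_iff.2 happrox⟩
end
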